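/- Let α, β > 0 and ξ > 0, set k₀ = (αβ²/(4ξ))^{1/4}, and define θ(k) = ξ k² − αβ + αβ²/(4k²) for k ∈ ℂ \ {0}. Then: (i) for every k ∈ ℂ \ {0}, Im θ(k) = (αβ²/4) · Im(k²) · (1/k₀⁴ − 1/|k|⁴), so that |e^{−2itθ(k)}| = exp((t/2) αβ² Im(k²)(1/k₀⁴ − 1/|k|⁴)) for t ∈ ℝ; (ii) for every t ≥ 0 and every k ∈ ℂ \ {0} with |k| ≤ k₀/√2 and Im(k²) ≥ k₀²/4, one has |e^{−2itθ(k)}| ≤ exp(−3αβ² t/(8k₀²)). -/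

import Mathlib

open Complex

noncomputable section

/-- The phase function `θ(k) = ξk² − αβ + αβ²/(4k²)`. -/
def theta (α β ξ : ℝ) (k : ℂ) : ℂ :=
  (ξ : ℂ) * k ^ 2 - (α : ℂ) * β + (α : ℂ) * (β : ℂ) ^ 2 / (4 * k ^ 2)

/-! Since `ξ = αβ²/(4k₀⁴)`, both terms of `θ` contribute to `Im θ` through `Im(k²)` alone, with the
weights `ξ` and `−αβ²/(4|k|⁴)`; this gives (i). In the region of (ii), `|k|⁴ ≤ k₀⁴/4`, so
`1/k₀⁴ − 1/|k|⁴ ≤ −3/k₀⁴`, and multiplying by `Im(k²) ≥ k₀²/4` gives the decay rate. -/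

theorem norm_exp_neg_two_I_mul (t : ℝ) (z : ℂ) :
    ‖exp (-2 * I * t * z)‖ = Real.exp (2 * t * z.im) := by
  rw [norm_exp]
  congr 1
  simp [mul_re, mul_im]

theorem im_ofReal_div_sq (c : ℝ) (k : ℂ) :
    ((c : ℂ) / k ^ 2).im = -c * (k ^ 2).im / ‖k‖ ^ 4 := by
  have hnormSq : normSq (k ^ 2) = ‖k‖ ^ 4 := by
    rw [← Complex.sq_norm, norm_pow]; ring
  rw [div_eq_mul_inv, im_ofReal_mul, inv_im, hnormSq]
  ring

theorem theta_im (α β ξ : ℝ) (k : ℂ) :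
    (theta α β ξ k).im = ξ * (k ^ 2).im - α * β ^ 2 / 4 * (k ^ 2).im / ‖k‖ ^ 4 := by
  have hsplit : (α : ℂ) * (β : ℂ) ^ 2 / (4 * k ^ 2) = ((α * β ^ 2 / 4 : ℝ) : ℂ) / k ^ 2 := by
    push_cast; field_simp
  rw [theta, hsplit, add_im, sub_im, im_ofReal_mul, im_ofReal_div_sq]
  simp only [← ofReal_mul, ofReal_im]
  ring

theorem theta_im_eq_of_stationary {α β ξ k₀ : ℝ} (hk₀ : k₀ ≠ 0)
    (hstat : ξ * k₀ ^ 4 = α * β ^ 2 / 4) (k : ℂ) :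
    (theta α β ξ k).im = α * β ^ 2 / 4 * (k ^ 2).im * (1 / k₀ ^ 4 - 1 / ‖k‖ ^ 4) := by
  have hξ : ξ = α * β ^ 2 / 4 / k₀ ^ 4 := by
    rw [← hstat]; field_simp
  rw [theta_im, hξ]
  ring

theorem pow_four_le_of_le_div_sqrt_two {r k₀ : ℝ} (hr : 0 ≤ r) (hrk₀ : r ≤ k₀ / √2) :
    r ^ 4 ≤ k₀ ^ 4 / 4 := by
  have hsq : r ^ 2 ≤ k₀ ^ 2 / 2 := by
    calc r ^ 2 ≤ (k₀ / √2) ^ 2 := pow_le_pow_left₀ hr hrk₀ 2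
      _ = k₀ ^ 2 / 2 := by rw [div_pow, Real.sq_sqrt zero_le_two]
  calc r ^ 4 = (r ^ 2) ^ 2 := by ring
    _ ≤ (k₀ ^ 2 / 2) ^ 2 := pow_le_pow_left₀ (sq_nonneg r) hsq 2
    _ = k₀ ^ 4 / 4 := by ring

theorem mul_inv_pow_four_sub_le {r k₀ y : ℝ} (hk₀ : 0 < k₀) (hr : 0 < r)
    (hrk₀ : r ≤ k₀ / √2) (hy : k₀ ^ 2 / 4 ≤ y) :
    y * (1 / k₀ ^ 4 - 1 / r ^ 4) ≤ -3 / (4 * k₀ ^ 2) := by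
  have hinv : 4 / k₀ ^ 4 ≤ 1 / r ^ 4 := by
    rw [div_le_div_iff₀ (by positivity) (by positivity)]
    linarith [pow_four_le_of_le_div_sqrt_two hr.le hrk₀]
  have hD : 1 / k₀ ^ 4 - 1 / r ^ 4 ≤ -3 / k₀ ^ 4 := by
    linarith [show (-3 : ℝ) / k₀ ^ 4 = 1 / k₀ ^ 4 - 4 / k₀ ^ 4 by ring]
  have hDnonpos : 1 / k₀ ^ 4 - 1 / r ^ 4 ≤ 0 :=
    hD.trans (div_nonpos_of_nonpos_of_nonneg (by norm_num) (by positivity))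
  calc y * (1 / k₀ ^ 4 - 1 / r ^ 4)
      ≤ k₀ ^ 2 / 4 * (1 / k₀ ^ 4 - 1 / r ^ 4) := mul_le_mul_of_nonpos_right hy hDnonpos
    _ ≤ k₀ ^ 2 / 4 * (-3 / k₀ ^ 4) := mul_le_mul_of_nonneg_left hD (by positivity)
    _ = -3 / (4 * k₀ ^ 2) := by field_simp

theorem stmt_17 (α β ξ : ℝ) (hα : 0 < α) (hβ : 0 < β) (hξ : 0 < ξ)
    (k₀ : ℝ) (hk₀ : k₀ = (α * β ^ 2 / (4 * ξ)) ^ ((1 : ℝ) / 4)) :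
    -- (i)
    (∀ k : ℂ, k ≠ 0 →
      (theta α β ξ k).im
        = (α * β ^ 2 / 4) * (k ^ 2).im * (1 / k₀ ^ 4 - 1 / ‖k‖ ^ 4) ∧
      ∀ t : ℝ,
        ‖Complex.exp (-2 * Complex.I * (t : ℂ) * theta α β ξ k)‖
          = Real.exp ((t / 2) * α * β ^ 2 * (k ^ 2).im
              * (1 / k₀ ^ 4 - 1 / ‖k‖ ^ 4))) ∧
    -- (ii)
    (∀ t : ℝ, 0 ≤ t → ∀ k : ℂ, k ≠ 0 →
      ‖k‖ ≤ k₀ / Real.sqrt 2 → k₀ ^ 2 / 4 ≤ (k ^ 2).im →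
      ‖Complex.exp (-2 * Complex.I * (t : ℂ) * theta α β ξ k)‖
        ≤ Real.exp (-3 * α * β ^ 2 * t / (8 * k₀ ^ 2))) := by
  have hbase : 0 < α * β ^ 2 / (4 * ξ) := by positivity
  have hk₀pos : 0 < k₀ := hk₀ ▸ Real.rpow_pos_of_pos hbase _
  have hstat : ξ * k₀ ^ 4 = α * β ^ 2 / 4 := by
    have hroot := Real.rpow_inv_natCast_pow hbase.le (n := 4) four_ne_zero
    push_cast at hroot
    rw [hk₀, one_div, hroot]
    field_simp
  have him := theta_im_eq_of_stationary hk₀pos.ne' hstat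
  refine ⟨fun k hk => ⟨him k, fun t => ?_⟩, fun t ht k hk hkk₀ hky => ?_⟩
  · rw [norm_exp_neg_two_I_mul, him k]
    ring_nf
  · rw [norm_exp_neg_two_I_mul, him k, Real.exp_le_exp]
    calc 2 * t * (α * β ^ 2 / 4 * (k ^ 2).im * (1 / k₀ ^ 4 - 1 / ‖k‖ ^ 4))
        = t * α * β ^ 2 / 2 * ((k ^ 2).im * (1 / k₀ ^ 4 - 1 / ‖k‖ ^ 4)) := by ring
      _ ≤ t * α * β ^ 2 / 2 * (-3 / (4 * k₀ ^ 2)) :=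
        mul_le_mul_of_nonneg_left
          (mul_inv_pow_four_sub_le hk₀pos (norm_pos_iff.mpr hk) hkk₀ hky) (by positivity)
      _ = -3 * α * β ^ 2 * t / (8 * k₀ ^ 2) := by ring

end
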